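/- Advantage characterization of soft-optimality (Proposition opt_cond, part 1): Let β > 0, let r be a bounded measurable reward, and let π be a Markov policy whose kernels have ν-densities π_t(a|s) with log π_t bounded measurable. Then π coincides with the soft-optimal policy π*_r (i.e. π_t(·|s) = π*_{t,r}(·|s) for all t and all s ∈ S) if and only if the regularized advantage vanishes: A^π_{t,r}(s,a) = 0 for all t ∈ {1,…,T}, all s ∈ S, and ν-almost every a ∈ A. -/

import Mathlib

open MeasureTheory ProbabilityTheory Real
open scoped ENNReal RealInnerProductSpace

noncomputable section

namespace IRL

variable {S A : Type*} [MeasurableSpace S] [MeasurableSpace A]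

/-- A reward tuple `(r_t)` of bounded measurable functions. -/
def IsBddReward (r : ℕ → S → A → ℝ) : Prop :=
  ∀ t, Measurable (fun q : S × A => r t q.1 q.2) ∧ ∃ C, ∀ s a, |r t s a| ≤ C

/-- `p` is a family of `ν`-probability densities of a Markov policy. -/
def IsPolicyDensity (ν : Measure A) (p : ℕ → S → A → ℝ) : Prop :=
  (∀ t, Measurable (fun q : S × A => p t q.1 q.2)) ∧ (∀ t s a, 0 ≤ p t s a) ∧
    (∀ t s, ∫ a, p t s a ∂ν = 1)

/-- the log-densities `log π_t` are bounded (in particular the densities are positive). -/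
def HasBddLogDensity (p : ℕ → S → A → ℝ) : Prop :=
  ∀ t, (∀ s a, 0 < p t s a) ∧ ∃ C, ∀ s a, |Real.log (p t s a)| ≤ C

variable (T : ℕ) (P : ℕ → Kernel (S × A) S) (ν : Measure A)

/-- Soft-optimal value function `V*_{t,r}` (backward recursion, `V* t ≡ 0` for `t > T`). -/
def Vstar (β : ℝ) (r : ℕ → S → A → ℝ) (t : ℕ) (s : S) : ℝ :=
  if T < t then 0
  else β * Real.log (∫ a, Real.exp ((r t s a + ∫ s', Vstar β r (t + 1) s' ∂(P t (s, a))) / β) ∂ν)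
termination_by T + 1 - t
decreasing_by omega

/-- Soft-optimal state-action value `Q*_{t,r}`. -/
def Qstar (β : ℝ) (r : ℕ → S → A → ℝ) (t : ℕ) (s : S) (a : A) : ℝ :=
  r t s a + ∫ s', Vstar T P ν β r (t + 1) s' ∂(P t (s, a))

/-- `ν`-density of the soft-optimal policy `π*_r`. -/
def piStar (β : ℝ) (r : ℕ → S → A → ℝ) (t : ℕ) (s : S) (a : A) : ℝ :=
  Real.exp ((Qstar T P ν β r t s a - Vstar T P ν β r t s) / β)

/-- Value function `V^π_{t,r}` of a policy given by densities `p` (with `β = 0` this is the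
unregularized value function `V^{π,0}`). -/
def Vpol (β : ℝ) (p r : ℕ → S → A → ℝ) (t : ℕ) (s : S) : ℝ :=
  if T < t then 0
  else ∫ a,
    (r t s a + (∫ s', Vpol β p r (t + 1) s' ∂(P t (s, a))) - β * Real.log (p t s a)) * p t s a ∂ν
termination_by T + 1 - t
decreasing_by omega

/-- `Q^π_{t,r}` for a policy given by densities `p`. -/
def Qpol (β : ℝ) (p r : ℕ → S → A → ℝ) (t : ℕ) (s : S) (a : A) : ℝ :=
  r t s a + ∫ s', Vpol T P ν β p r (t + 1) s' ∂(P t (s, a))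

/-- Regularized advantage `A^π_{t,r}(s,a) = Q^π - V^π - β log π_t(a|s)`. -/
def Apol (β : ℝ) (p r : ℕ → S → A → ℝ) (t : ℕ) (s : S) (a : A) : ℝ :=
  Qpol T P ν β p r t s a - Vpol T P ν β p r t s - β * Real.log (p t s a)

variable (P0 : Measure S)

/-- Optimal value `J*(r) = ∫ V*_{1,r} dP₀`. -/
def Jstar (β : ℝ) (r : ℕ → S → A → ℝ) : ℝ := ∫ s, Vstar T P ν β r 1 s ∂P0

/-- Expected (regularized) return `J(r,π)` of a density policy. -/
def Jpol (β : ℝ) (p r : ℕ → S → A → ℝ) : ℝ := ∫ s, Vpol T P ν β p r 1 s ∂P0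

/-- Iterated expectation, from time `t` in state `s`, of a trajectory functional `g` under a
(kernel) Markov policy `π`; coordinates of the trajectory outside `{1,…,T}` are irrelevant
junk values. -/
def polExp [Nonempty S] [Nonempty A] (pol : ℕ → Kernel S A) (g : (ℕ → S × A) → ℝ) (t : ℕ)
    (s : S) : ℝ :=
  if T < t then g (fun _ => (Classical.arbitrary S, Classical.arbitrary A))
  else ∫ a, ∫ s', polExp pol (fun τ => g (Function.update τ t (s, a))) (t + 1) s' ∂(P t (s, a))
    ∂(pol t s)
termination_by T + 1 - t
decreasing_by omega

/-- `μ` is the trajectory law `P^π` of the Markov policy `π` (with initial distribution `P₀`),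
characterized through integrals of all bounded measurable trajectory functionals. -/
def IsTrajLaw [Nonempty S] [Nonempty A] (pol : ℕ → Kernel S A) (μ : Measure (ℕ → S × A)) : Prop :=
  IsProbabilityMeasure μ ∧
    ∀ g : (ℕ → S × A) → ℝ, Measurable g → (∃ C, ∀ τ, |g τ| ≤ C) →
      ∫ τ, g τ ∂μ = ∫ s, polExp T P pol g 1 s ∂P0

/-- The kernel `s ↦ p t s ⬝ ν` of a policy given by densities. -/
def densKernel [IsFiniteMeasure ν] (p : ℕ → S → A → ℝ) (t : ℕ) : Kernel S A :=
  Kernel.withDensity (Kernel.const S ν) fun s a => ENNReal.ofReal (p t s a)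

open Classical in
/-- Kullback–Leibler divergence `∫ log (dμ/dμ') dμ` if `μ ≪ μ'` (`∞` otherwise). -/
def KL {X : Type*} [MeasurableSpace X] (μ μ' : Measure X) : ℝ≥0∞ :=
  if μ ≪ μ' ∧ Integrable (fun x => Real.log (μ.rnDeriv μ' x).toReal) μ then
    ENNReal.ofReal (∫ x, Real.log (μ.rnDeriv μ' x).toReal ∂μ)
  else ⊤

/-- Squared Hellinger distance, computed with the dominating measure `μ + μ'`. -/
def sqHellinger {X : Type*} [MeasurableSpace X] (μ μ' : Measure X) : ℝ :=
  ∫ x, (Real.sqrt ((μ.rnDeriv (μ + μ') x).toReal)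
      - Real.sqrt ((μ'.rnDeriv (μ + μ') x).toReal)) ^ 2 ∂(μ + μ')

/-- Second directional derivative. -/
def D2 {E : Type*} [NormedAddCommGroup E] [NormedSpace ℝ E] (F : E → ℝ) (θ ξ ζ : E) : ℝ :=
  fderiv ℝ (fun x => fderiv ℝ F x ζ) θ ξ

/-- Third directional derivative. -/
def D3 {E : Type*} [NormedAddCommGroup E] [NormedSpace ℝ E] (F : E → ℝ) (θ ξ ζ ω : E) : ℝ :=
  fderiv ℝ (fun x => D2 F x ζ ω) θ ξ

end IRL

open MeasureTheory ProbabilityTheory Real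
open scoped ENNReal

/-!
Both conditions force `V^π_t = V*_t` by backward induction on `t`. If `V^π_{t+1} = V*_{t+1}`
then `Q^π_t = Q*_t`; a policy density of the Gibbs form `exp ((Q*_t - v) / β)` has regularized
value `v`, and normalizing it forces `v = β log ∫ exp (Q*_t / β) dν = V*_t`. Once the value
functions agree, `A^π_t = Q*_t - V*_t - β log π_t` vanishes exactly where `π_t = π*_t`.
-/

theorem Nat.forall_of_backward_step {T : ℕ} {Q : ℕ → Prop} (hlt : ∀ t, T < t → Q t)
    (step : ∀ t ≤ T, Q (t + 1) → Q t) (t : ℕ) : Q t := by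
  rcases lt_or_ge T t with h | h
  · exact hlt t h
  · exact Nat.decreasingInduction' (fun k hk _ ih => step k (by omega) ih) (by omega : t ≤ T + 1)
      (hlt (T + 1) (by omega))

theorem withDensity_ofReal_eq_withDensity_ofReal_iff {A : Type*} [MeasurableSpace A]
    {ν : Measure A} [SigmaFinite ν] {f g : A → ℝ} (hf : Measurable f) (hg : Measurable g)
    (hf₀ : 0 ≤ f) (hg₀ : 0 ≤ g) :
    ν.withDensity (fun a => ENNReal.ofReal (f a)) = ν.withDensity (fun a => ENNReal.ofReal (g a))
      ↔ f =ᵐ[ν] g := by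
  rw [withDensity_eq_iff_of_sigmaFinite hf.ennreal_ofReal.aemeasurable
    hg.ennreal_ofReal.aemeasurable]
  refine Filter.eventually_congr (Filter.Eventually.of_forall fun a => ?_)
  exact ENNReal.ofReal_eq_ofReal_iff (hf₀ a) (hg₀ a)

theorem Real.sub_mul_log_eq_zero_iff {β x y : ℝ} (hβ : β ≠ 0) (hx : 0 < x) :
    y - β * Real.log x = 0 ↔ x = Real.exp (y / β) := by
  constructor
  · intro h
    rw [← Real.exp_log hx]
    congr 1
    field_simp
    linarith
  · rintro rfl
    rw [Real.log_exp, mul_div_cancel₀ _ hβ, sub_self]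

section Gibbs

variable {A : Type*} [MeasurableSpace A] {ν : Measure A} {β v : ℝ} {q ρ : A → ℝ}

theorem mul_log_integral_exp_div_eq_of_ae_eq (hβ : β ≠ 0) (hρ : ∫ a, ρ a ∂ν = 1)
    (h : ρ =ᵐ[ν] fun a => Real.exp ((q a - v) / β)) :
    β * Real.log (∫ a, Real.exp (q a / β) ∂ν) = v := by
  have hnorm : ∫ a, Real.exp (q a / β) ∂ν = Real.exp (v / β) := by
    calc ∫ a, Real.exp (q a / β) ∂ν
        = (∫ a, Real.exp ((q a - v) / β) ∂ν) * Real.exp (v / β) := by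
          rw [← integral_mul_const]
          simp only [← Real.exp_add, sub_div, sub_add_cancel]
      _ = Real.exp (v / β) := by rw [← integral_congr_ae h, hρ, one_mul]
  rw [hnorm, Real.log_exp, mul_div_cancel₀ _ hβ]

theorem integral_sub_mul_log_mul_eq_of_ae_eq (hβ : β ≠ 0) (hρ : ∫ a, ρ a ∂ν = 1)
    (h : ρ =ᵐ[ν] fun a => Real.exp ((q a - v) / β)) :
    ∫ a, (q a - β * Real.log (ρ a)) * ρ a ∂ν = v := by
  calc ∫ a, (q a - β * Real.log (ρ a)) * ρ a ∂ν = ∫ a, v * ρ a ∂ν := by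
        refine integral_congr_ae ?_
        filter_upwards [h] with a ha
        rw [ha, Real.log_exp, mul_div_cancel₀ _ hβ, sub_sub_cancel]
    _ = v := by rw [integral_const_mul, hρ, mul_one]

end Gibbs

namespace IRL

variable {S A : Type*} [MeasurableSpace S] [MeasurableSpace A] {T : ℕ}
  {P : ℕ → Kernel (S × A) S} {ν : Measure A} {β : ℝ} {p r : ℕ → S → A → ℝ}

theorem Vstar_of_lt {t : ℕ} (ht : T < t) (s : S) : Vstar T P ν β r t s = 0 := by
  rw [Vstar, if_pos ht]

theorem Vstar_of_le {t : ℕ} (ht : t ≤ T) (s : S) :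
    Vstar T P ν β r t s
      = β * Real.log (∫ a, Real.exp (Qstar T P ν β r t s a / β) ∂ν) := by
  rw [Vstar, if_neg (not_lt.mpr ht)]
  rfl

theorem Vpol_of_lt {t : ℕ} (ht : T < t) (s : S) : Vpol T P ν β p r t s = 0 := by
  rw [Vpol, if_pos ht]

theorem Vpol_of_le {t : ℕ} (ht : t ≤ T) (s : S) :
    Vpol T P ν β p r t s
      = ∫ a, (Qpol T P ν β p r t s a - β * Real.log (p t s a)) * p t s a ∂ν := by
  rw [Vpol, if_neg (not_lt.mpr ht)]
  rfl

theorem Qpol_eq_Qstar {t : ℕ} (h : Vpol T P ν β p r (t + 1) = Vstar T P ν β r (t + 1)) :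
    Qpol T P ν β p r t = Qstar T P ν β r t := by
  funext s a
  rw [Qpol, Qstar, h]

theorem Apol_eq_zero_iff (hβ : β ≠ 0) {t : ℕ} {s : S} {a : A} (hp : 0 < p t s a) :
    Apol T P ν β p r t s a = 0
      ↔ p t s a = Real.exp ((Qpol T P ν β p r t s a - Vpol T P ν β p r t s) / β) :=
  Real.sub_mul_log_eq_zero_iff hβ hp

theorem Apol_eq_zero_iff_eq_piStar (hβ : β ≠ 0) {t : ℕ} {s : S} {a : A} (hp : 0 < p t s a)
    (hV : Vpol T P ν β p r t = Vstar T P ν β r t)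
    (hV' : Vpol T P ν β p r (t + 1) = Vstar T P ν β r (t + 1)) :
    Apol T P ν β p r t s a = 0 ↔ p t s a = piStar T P ν β r t s a := by
  rw [Apol_eq_zero_iff hβ hp, Qpol_eq_Qstar hV', hV]
  rfl

theorem Vpol_eq_Vstar_of_ae_eq_piStar (hβ : β ≠ 0) {t : ℕ} {s : S} (ht : t ≤ T)
    (hV : Vpol T P ν β p r (t + 1) = Vstar T P ν β r (t + 1)) (hp : ∫ a, p t s a ∂ν = 1)
    (hπ : p t s =ᵐ[ν] piStar T P ν β r t s) :
    Vpol T P ν β p r t s = Vstar T P ν β r t s := by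
  rw [Vpol_of_le ht, Qpol_eq_Qstar hV]
  exact integral_sub_mul_log_mul_eq_of_ae_eq hβ hp hπ

theorem Vpol_eq_Vstar_of_ae_Apol_eq_zero (hβ : β ≠ 0) {t : ℕ} {s : S} (ht : t ≤ T)
    (hV : Vpol T P ν β p r (t + 1) = Vstar T P ν β r (t + 1)) (hp₀ : ∀ a, 0 < p t s a)
    (hp : ∫ a, p t s a ∂ν = 1) (hA : ∀ᵐ a ∂ν, Apol T P ν β p r t s a = 0) :
    Vpol T P ν β p r t s = Vstar T P ν β r t s := by
  rw [Vstar_of_le ht]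
  refine (mul_log_integral_exp_div_eq_of_ae_eq hβ hp ?_).symm
  filter_upwards [hA] with a ha
  rw [← Qpol_eq_Qstar hV]
  exact (Apol_eq_zero_iff hβ (hp₀ a)).mp ha

theorem Vpol_eq_Vstar_of_step
    (step : ∀ t, 1 ≤ t → t ≤ T →
      Vpol T P ν β p r (t + 1) = Vstar T P ν β r (t + 1) →
      Vpol T P ν β p r t = Vstar T P ν β r t)
    {t : ℕ} (ht : 1 ≤ t) : Vpol T P ν β p r t = Vstar T P ν β r t :=
  Nat.forall_of_backward_step (T := T)
    (Q := fun t => 1 ≤ t → Vpol T P ν β p r t = Vstar T P ν β r t)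
    (fun _ hlt _ => funext fun s => by rw [Vpol_of_lt hlt, Vstar_of_lt hlt])
    (fun t hle hnext h1 => step t h1 hle (hnext (by omega))) t ht

theorem measurable_Qstar {t : ℕ} [IsSFiniteKernel (P t)]
    (hr : Measurable fun x : S × A => r t x.1 x.2)
    (hV : Measurable (Vstar T P ν β r (t + 1))) :
    Measurable fun x : S × A => Qstar T P ν β r t x.1 x.2 :=
  hr.add (hV.comp measurable_snd).stronglyMeasurable.integral_kernel_prod_right'.measurable

theorem measurable_Vstar [∀ t, IsSFiniteKernel (P t)] [SFinite ν]
    (hr : ∀ t, Measurable fun x : S × A => r t x.1 x.2) (t : ℕ) :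
    Measurable (Vstar T P ν β r t) := by
  refine Nat.forall_of_backward_step (T := T) (Q := fun t => Measurable (Vstar T P ν β r t))
    (fun t ht => ?_) (fun t ht hV => ?_) t
  · simp only [funext (Vstar_of_lt ht), measurable_const]
  · rw [funext (Vstar_of_le ht)]
    exact (((measurable_Qstar (hr t) hV).div_const β).exp.stronglyMeasurable.integral_prod_right'
      |>.measurable.log).const_mul β

theorem measurable_piStar [∀ t, IsSFiniteKernel (P t)] [SFinite ν]
    (hr : ∀ t, Measurable fun x : S × A => r t x.1 x.2)
    (t : ℕ) (s : S) : Measurable (piStar T P ν β r t s) :=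
  ((((measurable_Qstar (hr t) (measurable_Vstar hr (t + 1))).comp measurable_prodMk_left).sub
    measurable_const).div_const β).exp

end IRL

open IRL

theorem soft_optimality_iff_advantage_vanishes_general
    {S A : Type*} [MeasurableSpace S] [MeasurableSpace A]
    (T : ℕ)
    (P : ℕ → Kernel (S × A) S) [∀ t, IsMarkovKernel (P t)]
    (ν : Measure A) [IsFiniteMeasure ν]
    (β : ℝ) (hβ : 0 < β)
    (r : ℕ → S → A → ℝ) (hr : IRL.IsBddReward r)
    (p : ℕ → S → A → ℝ) (hp : IRL.IsPolicyDensity ν p) (hlog : IRL.HasBddLogDensity p) :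
    (∀ t, 1 ≤ t → t ≤ T → ∀ s : S,
        ν.withDensity (fun a => ENNReal.ofReal (p t s a))
          = ν.withDensity (fun a => ENNReal.ofReal (IRL.piStar T P ν β r t s a)))
      ↔ (∀ t, 1 ≤ t → t ≤ T → ∀ s : S, ∀ᵐ a ∂ν, IRL.Apol T P ν β p r t s a = 0) := by
  obtain ⟨hpm, hp₀, hp₁⟩ := hp
  have hpos t s a : 0 < p t s a := (hlog t).1 s a
  have hdens t s : ν.withDensity (fun a => ENNReal.ofReal (p t s a))
      = ν.withDensity (fun a => ENNReal.ofReal (piStar T P ν β r t s a))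
        ↔ p t s =ᵐ[ν] piStar T P ν β r t s :=
    withDensity_ofReal_eq_withDensity_ofReal_iff ((hpm t).comp measurable_prodMk_left)
      (measurable_piStar (fun t => (hr t).1) t s) (hp₀ t s) fun _ => (Real.exp_pos _).le
  constructor
  · intro hπ
    have hV : ∀ t, 1 ≤ t → Vpol T P ν β p r t = Vstar T P ν β r t := fun _ =>
      Vpol_eq_Vstar_of_step fun t h1 hle hV => funext fun s =>
        Vpol_eq_Vstar_of_ae_eq_piStar hβ.ne' hle hV (hp₁ t s)
          ((hdens t s).mp (hπ t h1 hle s))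
    intro t h1 hle s
    filter_upwards [(hdens t s).mp (hπ t h1 hle s)] with a ha
    exact (Apol_eq_zero_iff_eq_piStar hβ.ne' (hpos t s a) (hV t h1) (hV (t + 1) (by omega))).mpr ha
  · intro hA
    have hV : ∀ t, 1 ≤ t → Vpol T P ν β p r t = Vstar T P ν β r t := fun _ =>
      Vpol_eq_Vstar_of_step fun t h1 hle hV => funext fun s =>
        Vpol_eq_Vstar_of_ae_Apol_eq_zero hβ.ne' hle hV (hpos t s) (hp₁ t s)
          (hA t h1 hle s)
    intro t h1 hle s
    refine (hdens t s).mpr ?_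
    filter_upwards [hA t h1 hle s] with a ha
    exact (Apol_eq_zero_iff_eq_piStar hβ.ne' (hpos t s a) (hV t h1) (hV (t + 1) (by omega))).mp ha

/-- **Advantage characterization of soft-optimality** (Proposition `opt_cond`, part 1).
For `β > 0`, a bounded measurable reward `r`, and a Markov policy `π` with bounded
log-`ν`-densities, `π` coincides with the soft-optimal policy `π*_r` (as measures
`π_t(·|s) = π*_{t,r}(·|s)` for all `t ∈ {1,…,T}` and all `s`) if and only if the regularized
advantage vanishes: `A^π_{t,r}(s,a) = 0` for all `t, s` and `ν`-a.e. `a`. -/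
theorem soft_optimality_iff_advantage_vanishes
    {S A : Type*} [MeasurableSpace S] [MeasurableSpace A]
    (T : ℕ) (hT : 1 ≤ T)
    (P0 : Measure S) [IsProbabilityMeasure P0]
    (P : ℕ → Kernel (S × A) S) [∀ t, IsMarkovKernel (P t)]
    (ν : Measure A) [IsFiniteMeasure ν] (hν : ν Set.univ ≠ 0)
    (β : ℝ) (hβ : 0 < β)
    (r : ℕ → S → A → ℝ) (hr : IRL.IsBddReward r)
    (p : ℕ → S → A → ℝ) (hp : IRL.IsPolicyDensity ν p) (hlog : IRL.HasBddLogDensity p) :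
    (∀ t, 1 ≤ t → t ≤ T → ∀ s : S,
        ν.withDensity (fun a => ENNReal.ofReal (p t s a))
          = ν.withDensity (fun a => ENNReal.ofReal (IRL.piStar T P ν β r t s a)))
      ↔ (∀ t, 1 ≤ t → t ≤ T → ∀ s : S, ∀ᵐ a ∂ν, IRL.Apol T P ν β p r t s a = 0) :=
  soft_optimality_iff_advantage_vanishes_general T P ν β hβ r hr p hp hlog
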